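/- For any integers m ≥ 2 and n ≥ 1, the sum over all complete m-ary trees T with n internal vertices of the product over all internal vertices v of T of 1/𝓗_v equals (m^n/(mn+1)) · C((mn+1)/m, n), where C(y, n) = y(y−1)⋯(y−n+1)/n! is the generalized binomial coefficient (here y = (mn+1)/m ∈ ℚ). -/

import Mathlib

open Polynomial Finset

/-- A complete `m`-ary tree: a `leaf` is an external vertex and a `node`
has exactly `m` linearly ordered subtrees. -/
inductive MTree (m : ℕ) : Type
  | leaf : MTree m
  | node : (Fin m → MTree m) → MTree m

namespace MTree

/-- The number of internal vertices of a complete `m`-ary tree. -/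
def internals {m : ℕ} : MTree m → ℕ
  | leaf => 0
  | node c => 1 + ∑ i, (c i).internals

/-- The first kind of hook length of the root of `node c`: one plus the number of
internal vertices of all subtrees except the rightmost one. -/
def hook1 {m : ℕ} (c : Fin m → MTree m) : ℕ :=
  1 + ∑ i ∈ Finset.univ.filter (fun i : Fin m => (i : ℕ) + 1 < m), (c i).internals

/-- The product of `f (𝓗_v)` over all internal vertices `v` of a complete `m`-ary
tree, where `𝓗_v` is the first kind of hook length. -/
def hookProd1 {m : ℕ} {R : Type*} [CommSemiring R] (f : ℕ → R) : MTree m → R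
  | leaf => 1
  | node c => f (hook1 c) * ∏ i, hookProd1 f (c i)

/-- The number of internal vertices of the `(m+1-|S|)`-ary tree `T^S` obtained from a
complete `(m+1)`-ary tree `T` by recursively deleting, for every `r ∈ S ⊆ [m]`,
the `r`-th subtree of every remaining internal vertex (the label `r ∈ {1,…,m}`
corresponds to the child with index `r - 1`, i.e. to `Fin.castSucc` of `Fin m`). -/
def internalsS {m : ℕ} (S : Finset (Fin m)) : MTree (m + 1) → ℕ
  | leaf => 0
  | node c => 1 + ∑ i ∈ (S.image Fin.castSucc)ᶜ, internalsS S (c i)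

/-- The product of `f (ℍ_v^S)` over all internal vertices `v` of a complete
`(m+1)`-ary tree, where `ℍ_v^S` is the second kind of hook length. -/
def hookProdS {m : ℕ} {R : Type*} [CommSemiring R] (S : Finset (Fin m)) (f : ℕ → R) :
    MTree (m + 1) → R
  | leaf => 1
  | node c => f (internalsS S (node c)) * ∏ i, hookProdS S f (c i)

end MTree

/-!
Removing the rightmost subtree of the root leaves a forest of `m - 1` trees whose total size is
`𝓗_root - 1`. Hence the weighted generating series `A = ∑_T (∏_v 1/𝓗_v) X^|T|` satisfies
`A = 1 + (∫ A^(m-1)) · A`, a recursion that determines `A` from its constant term. The series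
`E = (1 - m X)^(-1/m)` satisfies the same recursion, because `∫ E^(m-1) = 1 - E⁻¹`, so `A = E`; the
coefficient `∏_{k<n} (m k + 1) / n!` of `X^n` in `E` is the claimed closed form.
-/

open PowerSeries

/-- The coefficientwise form of `F = 1 + (∫ F^p) · F`. -/
def HookRecursion (p : ℕ) (F : ℚ⟦X⟧) : Prop :=
  ∀ n, coeff (n + 1) F =
    ∑ x ∈ antidiagonal n, ((x.1 : ℚ) + 1)⁻¹ * coeff x.1 (F ^ p) * coeff x.2 F

theorem PowerSeries.coeff_pow_eq_of_trunc_eq {R : Type*} [CommSemiring R] {F G : R⟦X⟧} {n k : ℕ}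
    (h : trunc n F = trunc n G) (hk : k < n) (p : ℕ) : coeff k (F ^ p) = coeff k (G ^ p) := by
  have h' := congrArg (fun f : R[X] => (trunc n ((f : R⟦X⟧) ^ p)).coeff k) h
  simpa only [trunc_trunc_pow, coeff_trunc, if_pos hk] using h'

namespace HookRecursion

variable {p : ℕ} {F G : ℚ⟦X⟧}

theorem eq_of_constantCoeff_eq (hF : HookRecursion p F) (hG : HookRecursion p G)
    (h0 : constantCoeff F = constantCoeff G) : F = G := by
  ext n
  induction n using Nat.strong_induction_on with
  | _ n ih =>
    rcases n with _ | n
    · simpa using h0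
    have htrunc : trunc (n + 1) F = trunc (n + 1) G := by
      ext k
      simp only [coeff_trunc]
      split_ifs with hk
      exacts [ih k hk, rfl]
    rw [hF, hG]
    refine Finset.sum_congr rfl fun x hx => ?_
    have hx' := mem_antidiagonal.mp hx
    rw [coeff_pow_eq_of_trunc_eq htrunc (by omega), ih x.2 (by omega)]

theorem of_eq_one_add_mul {J : ℚ⟦X⟧} (hF : F = 1 + J * F) (hJ0 : constantCoeff J = 0)
    (hJ : d⁄dX ℚ J = F ^ p) : HookRecursion p F := by
  have hJcoeff (k : ℕ) : coeff (k + 1) J = ((k : ℚ) + 1)⁻¹ * coeff k (F ^ p) := by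
    rw [← hJ, PowerSeries.coeff_derivative]
    field_simp
  intro n
  conv_lhs => rw [hF, map_add, PowerSeries.coeff_mul, Finset.Nat.sum_antidiagonal_succ]
  simp [hJ0, hJcoeff, mul_assoc]

end HookRecursion

namespace MTree

variable {m : ℕ}

theorem finite_setOf_internals_le (N : ℕ) : {T : MTree m | T.internals ≤ N}.Finite := by
  induction N with
  | zero =>
    refine (Set.finite_singleton leaf).subset ?_
    rintro (_ | c) h
    · rfl
    · simp [internals] at h
  | succ N ih =>
    refine ((Set.Finite.pi fun _ => ih).image node |>.insert leaf).subset ?_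
    rintro (_ | c) h
    · exact Set.mem_insert _ _
    refine Set.mem_insert_of_mem _ ⟨c, fun i _ => ?_, rfl⟩
    have hci := Finset.single_le_sum (fun j _ => Nat.zero_le (c j).internals) (Finset.mem_univ i)
    simp only [internals, Set.mem_ofPred_eq] at h ⊢
    omega

variable (m) in
noncomputable def treesOfSize (n : ℕ) : Finset (MTree m) :=
  Set.Finite.toFinset (s := {T | T.internals = n})
    ((finite_setOf_internals_le n).subset fun _ h => le_of_eq h)

@[simp]
theorem mem_treesOfSize {n : ℕ} {T : MTree m} : T ∈ treesOfSize m n ↔ T.internals = n := by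
  simp [treesOfSize]

variable (m) in
noncomputable def forestsOfSize (q n : ℕ) : Finset (Fin q → MTree m) :=
  Set.Finite.toFinset (s := {c | ∑ i, (c i).internals = n})
    ((Set.Finite.pi fun _ => finite_setOf_internals_le n).subset fun c h i _ =>
      h ▸ Finset.single_le_sum (fun j _ => Nat.zero_le (c j).internals) (Finset.mem_univ i))

@[simp]
theorem mem_forestsOfSize {q n : ℕ} {c : Fin q → MTree m} :
    c ∈ forestsOfSize m q n ↔ ∑ i, (c i).internals = n := by
  simp [forestsOfSize]

theorem sum_forestsOfSize_succ {M : Type*} [AddCommMonoid M] (q n : ℕ)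
    (F : (Fin q → MTree m) → MTree m → M) :
    ∑ c ∈ forestsOfSize m (q + 1) n, F (Fin.init c) (c (Fin.last q)) =
      ∑ x ∈ antidiagonal n, ∑ c ∈ forestsOfSize m q x.1, ∑ t ∈ treesOfSize m x.2, F c t := by
  rw [← Finset.sum_fiberwise_of_maps_to (g := fun c => (∑ i, (Fin.init c i).internals,
    (c (Fin.last q)).internals)) (t := antidiagonal n)]
  · refine Finset.sum_congr rfl fun x _ => ?_
    rw [← Finset.sum_product']
    refine Finset.sum_nbij' (fun c => (Fin.init c, c (Fin.last q))) (fun y => Fin.snoc y.1 y.2)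
      ?_ ?_ ?_ ?_ ?_
    · intro c hc
      simp only [Finset.mem_filter] at hc
      simp [← hc.2]
    · rintro ⟨c, t⟩ h
      simp_all [Fin.sum_univ_castSucc]
    · intro c _
      simp
    · rintro ⟨c, t⟩ _
      simp
    · intro c _
      rfl
  · intro c hc
    simpa [Fin.sum_univ_castSucc, Fin.init] using hc

def hookWeight : MTree m → ℚ := hookProd1 fun h => (h : ℚ)⁻¹

variable (m) in
noncomputable def hookSeries : ℚ⟦X⟧ :=
  PowerSeries.mk fun n => ∑ T ∈ treesOfSize m n, hookWeight T

theorem treesOfSize_zero : treesOfSize m 0 = {leaf} := by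
  ext (_ | c) <;> simp [internals]

@[simp]
theorem constantCoeff_hookSeries : constantCoeff (hookSeries m) = 1 := by
  simp [hookSeries, ← coeff_zero_eq_constantCoeff_apply, treesOfSize_zero, hookWeight, hookProd1]

theorem sum_forestsOfSize_prod_hookWeight (q n : ℕ) :
    ∑ c ∈ forestsOfSize m q n, ∏ i, hookWeight (c i) = coeff n (hookSeries m ^ q) := by
  induction q generalizing n with
  | zero =>
    rw [pow_zero, PowerSeries.coeff_one]
    split_ifs with hn
    · rw [Finset.eq_univ_of_forall (s := forestsOfSize m 0 n) fun c => by simp [hn]]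
      simp
    · rw [Finset.eq_empty_of_forall_notMem (s := forestsOfSize m 0 n) fun c => by
        simp [Ne.symm hn]]
      simp
  | succ q ih =>
    simp_rw [pow_succ, PowerSeries.coeff_mul, ← ih, hookSeries, coeff_mk, Finset.sum_mul_sum]
    rw [← sum_forestsOfSize_succ]
    exact Finset.sum_congr rfl fun c _ => Fin.prod_univ_castSucc _

theorem sum_treesOfSize_succ {M : Type*} [AddCommMonoid M] (n : ℕ) (f : MTree m → M) :
    ∑ T ∈ treesOfSize m (n + 1), f T = ∑ c ∈ forestsOfSize m m n, f (node c) := by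
  refine (Finset.sum_bij (fun c _ => node c) ?_ ?_ ?_ ?_).symm
  · intro c hc
    simp_all [internals, add_comm]
  · intro c _ c' _ h
    exact node.inj h
  · rintro (_ | c) h
    · simp [internals] at h
    · refine ⟨c, ?_, rfl⟩
      simp only [mem_treesOfSize, internals] at h
      simp only [mem_forestsOfSize]
      omega
  · intro c _
    rfl

theorem hookWeight_node {p : ℕ} (c : Fin (p + 1) → MTree (p + 1)) :
    hookWeight (node c) = ((∑ i, (Fin.init c i).internals : ℕ) + 1 : ℚ)⁻¹ *
      (∏ i, hookWeight (Fin.init c i)) * hookWeight (c (Fin.last p)) := by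
  simp [hookWeight, hookProd1, hook1, Finset.sum_filter, Fin.sum_univ_castSucc,
    Fin.prod_univ_castSucc, Fin.init, add_comm, mul_assoc]

theorem hookRecursion_hookSeries (p : ℕ) : HookRecursion p (hookSeries (p + 1)) := by
  intro n
  rw [hookSeries, coeff_mk, sum_treesOfSize_succ]
  simp_rw [hookWeight_node]
  rw [sum_forestsOfSize_succ p n fun c t => ((∑ i, (c i).internals : ℕ) + 1 : ℚ)⁻¹ *
      (∏ i, hookWeight (c i)) * hookWeight t]
  refine Finset.sum_congr rfl fun x _ => ?_
  rw [← hookSeries, ← sum_forestsOfSize_prod_hookWeight, hookSeries, coeff_mk]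
  simp only [Finset.mul_sum, Finset.sum_mul]
  rw [Finset.sum_comm]
  refine Finset.sum_congr rfl fun t _ => Finset.sum_congr rfl fun c hc => ?_
  rw [mem_forestsOfSize.mp hc]

end MTree

/-- The coefficients of `(1 - m X)^(-1/m)`. -/
def rootCoeff (m n : ℕ) : ℚ := (∏ k ∈ Finset.range n, ((m : ℚ) * k + 1)) / n.factorial

noncomputable def rootSeries (m : ℕ) : ℚ⟦X⟧ := PowerSeries.mk (rootCoeff m)

theorem rootCoeff_succ (m n : ℕ) :
    ((n : ℚ) + 1) * rootCoeff m (n + 1) = ((m : ℚ) * n + 1) * rootCoeff m n := by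
  simp only [rootCoeff, Finset.prod_range_succ, Nat.factorial_succ]
  push_cast
  field_simp

@[simp]
theorem constantCoeff_rootSeries (m : ℕ) : constantCoeff (rootSeries m) = 1 := by
  simp [rootSeries, rootCoeff]

theorem one_sub_mul_X_mul_derivative_rootSeries (m : ℕ) :
    (1 - (m : ℚ⟦X⟧) * PowerSeries.X) * d⁄dX ℚ (rootSeries m) = rootSeries m := by
  ext n
  rw [sub_mul, one_mul, mul_assoc, ← map_natCast (PowerSeries.C (R := ℚ)), map_sub,
    PowerSeries.coeff_C_mul]
  rcases n with _ | n
  · simpa [rootSeries, PowerSeries.coeff_derivative] using rootCoeff_succ m 0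
  · simp only [coeff_succ_X_mul, rootSeries, PowerSeries.coeff_derivative, coeff_mk]
    have h := rootCoeff_succ m (n + 1)
    push_cast at h ⊢
    linear_combination h

theorem one_sub_mul_X_mul_derivative_rootSeries_pow (m k : ℕ) :
    (1 - (m : ℚ⟦X⟧) * PowerSeries.X) * d⁄dX ℚ (rootSeries m ^ k) =
      (k : ℚ⟦X⟧) * rootSeries m ^ k := by
  induction k with
  | zero => simp
  | succ k ih =>
    rw [pow_succ, Derivation.leibniz, smul_eq_mul, smul_eq_mul]
    push_cast
    linear_combination (rootSeries m ^ k) * one_sub_mul_X_mul_derivative_rootSeries m +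
      rootSeries m * ih

theorem rootSeries_pow_mul_one_sub (m : ℕ) :
    rootSeries m ^ m * (1 - (m : ℚ⟦X⟧) * PowerSeries.X) = 1 := by
  apply derivative.ext
  · have hlin : d⁄dX ℚ (1 - (m : ℚ⟦X⟧) * PowerSeries.X) = -(m : ℚ⟦X⟧) := by
      simp
    rw [Derivation.leibniz, smul_eq_mul, smul_eq_mul, hlin, Derivation.map_one_eq_zero]
    linear_combination one_sub_mul_X_mul_derivative_rootSeries_pow m m
  · simp

theorem hookRecursion_rootSeries (p : ℕ) : HookRecursion p (rootSeries (p + 1)) := by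
  set E := rootSeries (p + 1)
  have hE := rootSeries_pow_mul_one_sub (p + 1)
  -- `J = 1 - E⁻¹`, as `E^(p+1) (1 - (p+1) X) = 1`
  refine HookRecursion.of_eq_one_add_mul
    (J := 1 - (1 - ((p + 1 : ℕ) : ℚ⟦X⟧) * PowerSeries.X) * E ^ p) ?_ (by simp [E]) ?_
  · linear_combination hE
  · have hlin :
        d⁄dX ℚ (1 - ((p + 1 : ℕ) : ℚ⟦X⟧) * PowerSeries.X) = -((p + 1 : ℕ) : ℚ⟦X⟧) := by
      simp
    rw [map_sub, Derivation.map_one_eq_zero, Derivation.leibniz, smul_eq_mul, smul_eq_mul, hlin]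
    have := one_sub_mul_X_mul_derivative_rootSeries_pow (p + 1) p
    push_cast at this ⊢
    linear_combination -this

theorem rootCoeff_eq {m : ℕ} (hm : m ≠ 0) (n : ℕ) :
    rootCoeff m n = (m : ℚ) ^ n * ((m : ℚ) * n + 1)⁻¹ * (n.factorial : ℚ)⁻¹ *
      ∏ j ∈ Finset.range n, (((m : ℚ) * n + 1) / (m : ℚ) - (j : ℚ)) := by
  have hreflect : (m : ℚ) ^ n * ∏ j ∈ Finset.range n, (((m : ℚ) * n + 1) / m - j) =
      ∏ k ∈ Finset.range n, ((m : ℚ) * (k + 1) + 1) := by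
    rw [← Finset.prod_range_reflect, ← Finset.card_range n, ← Finset.prod_const,
      Finset.card_range, ← Finset.prod_mul_distrib]
    refine Finset.prod_congr rfl fun j hj => ?_
    rw [Nat.cast_sub (by simp at hj; omega), Nat.cast_sub (by simp at hj; omega)]
    field_simp
    ring
  have hshift := (Finset.prod_range_succ' (fun k : ℕ => (m : ℚ) * k + 1) n).symm.trans
    (Finset.prod_range_succ (fun k : ℕ => (m : ℚ) * k + 1) n)
  push_cast at hshift
  rw [mul_zero, zero_add, mul_one] at hshift
  have hmn : (m : ℚ) * n + 1 ≠ 0 := by positivity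
  calc rootCoeff m n = ((m : ℚ) * n + 1)⁻¹ * (n.factorial : ℚ)⁻¹ *
        ∏ k ∈ Finset.range n, ((m : ℚ) * (k + 1) + 1) := by
        rw [rootCoeff, hshift]
        field_simp
    _ = _ := by
        rw [← hreflect]
        ring

theorem hook_length_corollary_inv_general (m n : ℕ) (hm : 2 ≤ m) :
    (∑ᶠ T ∈ {T : MTree m | T.internals = n},
        MTree.hookProd1 (fun h => ((h : ℚ))⁻¹) T)
      = (m : ℚ) ^ n * ((m : ℚ) * n + 1)⁻¹ * (n.factorial : ℚ)⁻¹ *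
          ∏ j ∈ Finset.range n, (((m : ℚ) * n + 1) / (m : ℚ) - (j : ℚ)) := by
  obtain ⟨p, rfl⟩ : ∃ p, m = p + 1 := ⟨m - 1, by omega⟩
  have hseries : MTree.hookSeries (p + 1) = rootSeries (p + 1) :=
    (MTree.hookRecursion_hookSeries p).eq_of_constantCoeff_eq (hookRecursion_rootSeries p)
      (by simp)
  have hset : {T : MTree (p + 1) | T.internals = n} = MTree.treesOfSize (p + 1) n := by
    ext
    simp
  rw [hset, finsum_mem_coe_finset, ← rootCoeff_eq (by omega)]
  simpa [MTree.hookSeries, MTree.hookWeight, rootSeries] using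
    congrArg (PowerSeries.coeff n) hseries

/-- **Corollary (x = 0 in Theorem 1.1).**  For `m ≥ 2` and `n ≥ 1`,
`∑_{T ∈ 𝒯_{n,m}} ∏_{v ∈ 𝓘(T)} 1/𝓗_v = (m^n/(mn+1)) ⬝ C((mn+1)/m, n)`, where
`C(y,n) = y(y-1)⋯(y-n+1)/n!`. -/
theorem hook_length_corollary_inv (m n : ℕ) (hm : 2 ≤ m) (hn : 1 ≤ n) :
    (∑ᶠ T ∈ {T : MTree m | T.internals = n},
        MTree.hookProd1 (fun h => ((h : ℚ))⁻¹) T)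
      = (m : ℚ) ^ n * ((m : ℚ) * n + 1)⁻¹ * (n.factorial : ℚ)⁻¹ *
          ∏ j ∈ Finset.range n, (((m : ℚ) * n + 1) / (m : ℚ) - (j : ℚ)) :=
  hook_length_corollary_inv_general m n hm
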